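/- Let {X_s} be Banach spaces and {Θ_s} λ_s-BK-spaces, both decreasing with increasing norms and dense intersections, with each Θ_s and Θ_s* a CB-space. Let {g_i} ⊂ X_F* be an F-Bessel sequence for X_F with respect to Θ_F, and suppose {f_i} ⊂ X_F is a DF-Bessel sequence for X_F* (i.e., a Θ_s*-Bessel sequence for X_s* for each s) such that f = ∑_i g_i(f) f_i in X_F for every f ∈ X_F. Then for every s and every f ∈ X_s, f = ∑_i g_i^s(f) f_i in X_s (where g_i^s is the continuous extension of g_i to X_s), and {g_i} is an F-frame for X_F with respect to Θ_F. -/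

import Mathlib

open Filter Topology

noncomputable section

def IsNormOn {X : Type*} [AddCommGroup X] [Module ℝ X] (S : Set X) (N : X → ℝ) : Prop :=
  (0 : X) ∈ S ∧ (∀ c ∈ S, ∀ d ∈ S, c + d ∈ S) ∧ (∀ (a : ℝ), ∀ c ∈ S, a • c ∈ S) ∧
  (∀ c ∈ S, 0 ≤ N c) ∧ (∀ c ∈ S, N c = 0 → c = 0) ∧
  (∀ c ∈ S, ∀ d ∈ S, N (c + d) ≤ N c + N d) ∧
  (∀ (a : ℝ), ∀ c ∈ S, N (a • c) = |a| * N c)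

def IsBanachOn {X : Type*} [AddCommGroup X] [Module ℝ X] (S : Set X) (N : X → ℝ) : Prop :=
  IsNormOn S N ∧ ∀ u : ℕ → X, (∀ n, u n ∈ S) →
    (∀ ε > 0, ∃ M, ∀ m ≥ M, ∀ n ≥ M, N (u m - u n) < ε) →
    ∃ x ∈ S, Tendsto (fun n => N (u n - x)) atTop (nhds 0)

def IsBKOn (S : Set (ℕ → ℝ)) (N : (ℕ → ℝ) → ℝ) : Prop :=
  IsBanachOn S N ∧ ∀ i, ∃ K : ℝ, ∀ c ∈ S, |c i| ≤ K * N c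

def IsScale {X : Type*} [AddCommGroup X] [Module ℝ X] (S : ℕ → Set X) (N : ℕ → X → ℝ) : Prop :=
  (∀ s, IsBanachOn (S s) (N s)) ∧ (∀ s, S (s+1) ⊆ S s) ∧
  (∀ s, ∀ f ∈ S (s+1), N s f ≤ N (s+1) f) ∧
  (∀ s, ∀ f ∈ S s, ∀ ε > 0, ∃ h ∈ ⋂ t, S t, N s (f - h) < ε)


/-!
Testing `∑_{m ≤ i < n} c i • fv i` against a norming functional (Hahn–Banach) and using the
DF-Bessel property together with the `λ_s`-truncation bound gives the synthesis estimate
`N s (∑_{m ≤ i < n} c i • fv i) ≤ K s * NT s (c - c|_{[0, m)})`. Since `Θ_s` is a CB-space the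
right-hand side tends to `0`, so for `c ∈ Θ_F` the series `∑ c i • fv i` converges in every `X_s`,
to one limit `V c ∈ X_F` with `N s (V c) ≤ K s * NT s c`. The expansion in `X_F` says
`V (g f) = f`, which yields the lower frame bound. Finally, extending each `g i` to `X_s` by
Hahn–Banach, the partial-sum operators `f ↦ ∑_{i < n} g_i^s f • fv i` are uniformly bounded on
the dense subspace `X_F`, hence on `X_s`, and the expansion passes from `X_F` to `X_s`.
-/

namespace IsNormOn

variable {X : Type*} [AddCommGroup X] [Module ℝ X] {S : Set X} {N : X → ℝ}

def submodule (hN : IsNormOn S N) : Submodule ℝ X where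
  carrier := S
  zero_mem' := hN.1
  add_mem' hx hy := hN.2.1 _ hx _ hy
  smul_mem' a _ hx := hN.2.2.1 a _ hx

theorem add_mem (hN : IsNormOn S N) {x y : X} (hx : x ∈ S) (hy : y ∈ S) : x + y ∈ S :=
  hN.submodule.add_mem hx hy

theorem smul_mem (hN : IsNormOn S N) (a : ℝ) {x : X} (hx : x ∈ S) : a • x ∈ S :=
  hN.submodule.smul_mem a hx

theorem sub_mem (hN : IsNormOn S N) {x y : X} (hx : x ∈ S) (hy : y ∈ S) : x - y ∈ S :=
  hN.submodule.sub_mem hx hy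

theorem sum_mem (hN : IsNormOn S N) {ι : Type*} {t : Finset ι} {f : ι → X}
    (hf : ∀ i ∈ t, f i ∈ S) : ∑ i ∈ t, f i ∈ S :=
  hN.submodule.sum_mem hf

theorem nonneg (hN : IsNormOn S N) {x : X} (hx : x ∈ S) : 0 ≤ N x := hN.2.2.2.1 x hx

theorem norm_smul (hN : IsNormOn S N) (a : ℝ) {x : X} (hx : x ∈ S) : N (a • x) = |a| * N x :=
  hN.2.2.2.2.2.2 a x hx

theorem norm_zero (hN : IsNormOn S N) : N 0 = 0 := by
  simpa using hN.norm_smul 0 hN.1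

theorem norm_add_le (hN : IsNormOn S N) {x y : X} (hx : x ∈ S) (hy : y ∈ S) :
    N (x + y) ≤ N x + N y :=
  hN.2.2.2.2.2.1 x hx y hy

theorem eq_of_norm_sub_eq_zero (hN : IsNormOn S N) {x y : X} (hx : x ∈ S) (hy : y ∈ S)
    (h : N (x - y) = 0) : x = y :=
  sub_eq_zero.1 (hN.2.2.2.2.1 _ (hN.sub_mem hx hy) h)

theorem norm_sub_comm (hN : IsNormOn S N) {x y : X} (hx : x ∈ S) (hy : y ∈ S) :
    N (x - y) = N (y - x) := by
  rw [← neg_sub, ← neg_one_smul ℝ, hN.norm_smul _ (hN.sub_mem hy hx), abs_neg, abs_one, one_mul]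

theorem norm_sub_le (hN : IsNormOn S N) {x y z : X} (hx : x ∈ S) (hy : y ∈ S) (hz : z ∈ S) :
    N (x - z) ≤ N (x - y) + N (y - z) := by
  simpa using hN.norm_add_le (hN.sub_mem hx hy) (hN.sub_mem hy hz)

theorem abs_sub_le_norm_sub (hN : IsNormOn S N) {x y : X} (hx : x ∈ S) (hy : y ∈ S) :
    |N x - N y| ≤ N (x - y) := by
  have hxy := hN.norm_add_le (hN.sub_mem hx hy) hy
  have hyx := hN.norm_add_le (hN.sub_mem hy hx) hx
  rw [sub_add_cancel] at hxy hyx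
  have hcomm := hN.norm_sub_comm hx hy
  rw [abs_sub_le_iff]
  constructor <;> linarith

theorem norm_sum_le (hN : IsNormOn S N) {ι : Type*} (t : Finset ι) {f : ι → X}
    (hf : ∀ i ∈ t, f i ∈ S) : N (∑ i ∈ t, f i) ≤ ∑ i ∈ t, N (f i) := by
  classical
  induction t using Finset.induction_on with
  | empty => simp [hN.norm_zero]
  | insert a t ha ih =>
    rw [Finset.sum_insert ha, Finset.sum_insert ha]
    have hft : ∀ i ∈ t, f i ∈ S := fun i hi => hf i (Finset.mem_insert_of_mem hi)
    exact (hN.norm_add_le (hf a (Finset.mem_insert_self a t)) (hN.sum_mem hft)).trans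
      (add_le_add_right (ih hft) _)

theorem eq_of_tendsto (hN : IsNormOn S N) {u : ℕ → X} {x y : X} (hu : ∀ n, u n ∈ S)
    (hx : x ∈ S) (hy : y ∈ S) (hxu : Tendsto (fun n => N (x - u n)) atTop (𝓝 0))
    (hyu : Tendsto (fun n => N (y - u n)) atTop (𝓝 0)) : x = y := by
  refine hN.eq_of_norm_sub_eq_zero hx hy (le_antisymm ?_ (hN.nonneg (hN.sub_mem hx hy)))
  refine ge_of_tendsto' (by simpa using hxu.add hyu) fun n => ?_
  rw [hN.norm_sub_comm hy (hu n)]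
  exact hN.norm_sub_le hx (hu n) hy

theorem norm_le_of_tendsto (hN : IsNormOn S N) {u : ℕ → X} {x : X} (hu : ∀ n, u n ∈ S)
    (hx : x ∈ S) {b : ℝ} (hb : ∀ n, N (u n) ≤ b)
    (hxu : Tendsto (fun n => N (x - u n)) atTop (𝓝 0)) : N x ≤ b := by
  refine ge_of_tendsto' (by simpa using hxu.add_const b) fun n => ?_
  have := hN.norm_add_le (hN.sub_mem hx (hu n)) (hu n)
  rw [sub_add_cancel] at this
  linarith [hb n]

theorem tendsto_add (hN : IsNormOn S N) {u v : ℕ → X} {x y : X} (hu : ∀ n, u n ∈ S)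
    (hv : ∀ n, v n ∈ S) (hx : x ∈ S) (hy : y ∈ S)
    (hxu : Tendsto (fun n => N (x - u n)) atTop (𝓝 0))
    (hyv : Tendsto (fun n => N (y - v n)) atTop (𝓝 0)) :
    Tendsto (fun n => N (x + y - (u n + v n))) atTop (𝓝 0) := by
  refine squeeze_zero
    (fun n => hN.nonneg (hN.sub_mem (hN.add_mem hx hy) (hN.add_mem (hu n) (hv n)))) (fun n => ?_) (by simpa using hxu.add hyv)
  rw [add_sub_add_comm]
  exact hN.norm_add_le (hN.sub_mem hx (hu n)) (hN.sub_mem hy (hv n))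

theorem tendsto_smul (hN : IsNormOn S N) (a : ℝ) {u : ℕ → X} {x : X} (hu : ∀ n, u n ∈ S)
    (hx : x ∈ S) (hxu : Tendsto (fun n => N (x - u n)) atTop (𝓝 0)) :
    Tendsto (fun n => N (a • x - a • u n)) atTop (𝓝 0) := by
  simp_rw [← smul_sub]
  simp_rw [hN.norm_smul a (hN.sub_mem hx (hu _))]
  simpa using hxu.const_mul |a|

theorem cauchy_of_norm_sub_le (hN : IsNormOn S N) {u : ℕ → X} (hu : ∀ n, u n ∈ S)
    {b : ℕ → ℝ} (hb : Tendsto b atTop (𝓝 0)) (hub : ∀ m n, m ≤ n → N (u n - u m) ≤ b m) :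
    ∀ ε > 0, ∃ M, ∀ m ≥ M, ∀ n ≥ M, N (u m - u n) < ε := by
  intro ε hε
  obtain ⟨M, hM⟩ := eventually_atTop.1 (hb.eventually (gt_mem_nhds hε))
  refine ⟨M, fun m hm n hn => ?_⟩
  rcases le_total m n with hmn | hnm
  · rw [hN.norm_sub_comm (hu m) (hu n)]
    exact (hub m n hmn).trans_lt (hM m hm)
  · exact (hub n m hnm).trans_lt (hM n hn)

theorem exists_seminorm (hN : IsNormOn S N) : ∃ q : Seminorm ℝ X, ∀ x ∈ S, q x = N x := by
  obtain ⟨r, hr⟩ := LinearMap.exists_extend (LinearMap.id : hN.submodule →ₗ[ℝ] hN.submodule)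
  have hrx : ∀ x ∈ S, (r x : X) = x := fun x hx =>
    congrArg Subtype.val (LinearMap.congr_fun hr ⟨x, hx⟩)
  refine ⟨Seminorm.of (fun x => N (r x)) (fun x y => ?_) (fun a x => ?_), fun x hx => ?_⟩
  · rw [map_add]
    exact hN.norm_add_le (r x).2 (r y).2
  · rw [map_smul, Real.norm_eq_abs]
    exact hN.norm_smul a (r x).2
  · exact congrArg N (hrx x hx)

theorem exists_extension (hN : IsNormOn S N) {p : Submodule ℝ X} (hpS : ∀ x ∈ p, x ∈ S)
    (f : p →ₗ[ℝ] ℝ) {C : ℝ} (hC : 0 ≤ C) (hf : ∀ x : p, f x ≤ C * N x) :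
    ∃ G : X →ₗ[ℝ] ℝ, (∀ x : p, G x = f x) ∧ ∀ x ∈ S, |G x| ≤ C * N x := by
  obtain ⟨q, hq⟩ := hN.exists_seminorm
  obtain ⟨G, hGf, hGq⟩ := Module.Dual.exists_extension_of_le_seminorm_real p f
    (p := C.toNNReal • q) fun x => by
      simpa [hq x (hpS x x.2), NNReal.smul_def, Real.coe_toNNReal C hC] using hf x
  exact ⟨G, hGf, fun x hx => by
    simpa [hq x hx, NNReal.smul_def, Real.coe_toNNReal C hC] using hGq x⟩

theorem exists_dual_eq_norm (hN : IsNormOn S N) {x : X} (hx : x ∈ S) :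
    ∃ G : X →ₗ[ℝ] ℝ, G x = N x ∧ ∀ y ∈ S, |G y| ≤ N y := by
  rcases eq_or_ne x 0 with rfl | hx0
  · exact ⟨0, by simp [hN.norm_zero], fun y hy => by simpa using hN.nonneg hy⟩
  have hspan : ∀ y ∈ ℝ ∙ x, y ∈ S := fun y hy => by
    obtain ⟨a, rfl⟩ := Submodule.mem_span_singleton.1 hy
    exact hN.smul_mem a hx
  obtain ⟨G, hGx, hGS⟩ := hN.exists_extension hspan
    (N x • (LinearEquiv.coord ℝ X x hx0 : (ℝ ∙ x) →ₗ[ℝ] ℝ)) zero_le_one fun y => by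
      have hy := LinearEquiv.coord_apply_smul ℝ X x hx0 y
      rw [one_mul, ← hy, hN.norm_smul _ hx]
      simpa [mul_comm] using
        mul_le_mul_of_nonneg_right (le_abs_self (LinearEquiv.coord ℝ X x hx0 y)) (hN.nonneg hx)
  refine ⟨G, ?_, fun y hy => by simpa using hGS y hy⟩
  simpa [LinearEquiv.coord_self] using hGx ⟨x, Submodule.mem_span_singleton_self x⟩

theorem norm_apply_le_of_dense (hN : IsNormOn S N) {D : Set X} (hDS : D ⊆ S)
    (hD : ∀ f ∈ S, ∀ ε > 0, ∃ h ∈ D, N (f - h) < ε) {R : X →ₗ[ℝ] X} (hRS : ∀ f ∈ S, R f ∈ S)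
    {C K : ℝ} (hC : ∀ f ∈ S, N (R f) ≤ C * N f) (hK : ∀ h ∈ D, N (R h) ≤ K * N h)
    {f : X} (hf : f ∈ S) : N (R f) ≤ K * N f := by
  refine le_of_forall_pos_lt_add fun ε hε => ?_
  have hCK : 0 < |C| + |K| + 1 := by positivity
  obtain ⟨h, hhD, hfh⟩ := hD f hf (ε / (|C| + |K| + 1)) (div_pos hε hCK)
  have hh := hDS hhD
  have hfh' := hN.sub_mem hf hh
  have hsplit : N (R f) ≤ N (R (f - h)) + N (R h) := by
    simpa using hN.norm_add_le (hRS _ hfh') (hRS h hh)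
  have hRfh : N (R (f - h)) ≤ |C| * N (f - h) :=
    (hC _ hfh').trans (mul_le_mul_of_nonneg_right (le_abs_self C) (hN.nonneg hfh'))
  have hKh : K * (N h - N f) ≤ |K| * N (f - h) := by
    refine (le_abs_self _).trans ?_
    rw [abs_mul, abs_sub_comm]
    exact mul_le_mul_of_nonneg_left (hN.abs_sub_le_norm_sub hf hh) (abs_nonneg K)
  have hsmall : (|C| + |K|) * N (f - h) < ε := by
    calc (|C| + |K|) * N (f - h) ≤ (|C| + |K| + 1) * N (f - h) := by
          nlinarith [hN.nonneg hfh']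
      _ < (|C| + |K| + 1) * (ε / (|C| + |K| + 1)) := mul_lt_mul_of_pos_left hfh hCK
      _ = ε := by field_simp
  linarith [hK h hhD]

theorem tendsto_of_dense (hN : IsNormOn S N) {D : Set X} (hDS : D ⊆ S)
    (hD : ∀ f ∈ S, ∀ ε > 0, ∃ h ∈ D, N (f - h) < ε) {R : ℕ → X →ₗ[ℝ] X}
    (hRS : ∀ n, ∀ f ∈ S, R n f ∈ S) {K : ℝ} (hK : ∀ n, ∀ f ∈ S, N (R n f) ≤ K * N f)
    (hconv : ∀ h ∈ D, Tendsto (fun n => N (h - R n h)) atTop (𝓝 0)) {f : X} (hf : f ∈ S) :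
    Tendsto (fun n => N (f - R n f)) atTop (𝓝 0) := by
  refine tendsto_order.2 ⟨fun a ha => Eventually.of_forall fun n =>
    ha.trans_le (hN.nonneg (hN.sub_mem hf (hRS n f hf))), fun ε hε => ?_⟩
  have hK1 : 0 < 2 * (|K| + 1) := by positivity
  obtain ⟨h, hhD, hfh⟩ := hD f hf (ε / (2 * (|K| + 1))) (div_pos hε hK1)
  have hh := hDS hhD
  filter_upwards [(hconv h hhD).eventually (gt_mem_nhds (half_pos hε))] with n hn
  have hfh' := hN.sub_mem hf hh
  have hsplit : N (f - R n f) ≤ N (f - h) + N (h - R n h) + N (R n (h - f)) := by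
    have e : f - R n f = (f - h) + (h - R n h) + R n (h - f) := by rw [map_sub]; abel
    rw [e]
    have := hN.norm_add_le hfh' (hN.sub_mem hh (hRS n h hh))
    have := hN.norm_add_le (hN.add_mem hfh' (hN.sub_mem hh (hRS n h hh)))
      (hRS n _ (hN.sub_mem hh hf))
    linarith
  have hRhf : N (R n (h - f)) ≤ |K| * N (f - h) := by
    have := hK n _ (hN.sub_mem hh hf)
    rw [hN.norm_sub_comm hh hf] at this
    exact this.trans (mul_le_mul_of_nonneg_right (le_abs_self K) (hN.nonneg hfh'))
  have hsmall : (1 + |K|) * N (f - h) < ε / 2 := by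
    calc (1 + |K|) * N (f - h) < (1 + |K|) * (ε / (2 * (|K| + 1))) :=
          mul_lt_mul_of_pos_left hfh (by positivity)
      _ = ε / 2 := by rw [add_comm 1 |K|]; field_simp
  nlinarith

theorem exists_expansion_of_dense (hN : IsNormOn S N) {F : Submodule ℝ X}
    (hFS : ∀ x ∈ F, x ∈ S) (hF : ∀ f ∈ S, ∀ ε > 0, ∃ h ∈ F, N (f - h) < ε)
    {g : ℕ → X →ₗ[ℝ] ℝ} (hg : ∀ i, ∃ C, ∀ h ∈ F, |g i h| ≤ C * N h) {fv : ℕ → X}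
    (hfv : ∀ i, fv i ∈ S) {K : ℝ}
    (hK : ∀ n, ∀ h ∈ F, N (∑ i ∈ Finset.range n, g i h • fv i) ≤ K * N h)
    (hexp : ∀ h ∈ F, Tendsto (fun n => N (h - ∑ i ∈ Finset.range n, g i h • fv i)) atTop (𝓝 0)) :
    ∃ gs : ℕ → X →ₗ[ℝ] ℝ, (∀ i, ∃ C, ∀ f ∈ S, |gs i f| ≤ C * N f) ∧
      (∀ i, ∀ h ∈ F, gs i h = g i h) ∧
      ∀ f ∈ S, Tendsto (fun n => N (f - ∑ i ∈ Finset.range n, gs i f • fv i)) atTop (𝓝 0) := by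
  choose C hC using hg
  have hC' : ∀ i (h : F), (g i).domRestrict F h ≤ max (C i) 0 * N h := fun i h =>
    (le_abs_self _).trans ((hC i h h.2).trans
      (mul_le_mul_of_nonneg_right (le_max_left _ _) (hN.nonneg (hFS h h.2))))
  choose gs hgsF hgsS using fun i =>
    hN.exists_extension hFS ((g i).domRestrict F) (le_max_right (C i) 0) (hC' i)
  let R : ℕ → X →ₗ[ℝ] X := fun n => ∑ i ∈ Finset.range n, (gs i).smulRight (fv i)
  have hR : ∀ n f, R n f = ∑ i ∈ Finset.range n, gs i f • fv i := fun n f => by simp [R]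
  have hRF : ∀ n, ∀ h ∈ F, R n h = ∑ i ∈ Finset.range n, g i h • fv i := fun n h hh => by
    rw [hR]
    exact Finset.sum_congr rfl fun i _ => by rw [hgsF i ⟨h, hh⟩, LinearMap.domRestrict_apply]
  have hRS : ∀ n, ∀ f ∈ S, R n f ∈ S := fun n f _ => by
    rw [hR]
    exact hN.sum_mem fun i _ => hN.smul_mem _ (hfv i)
  have hRcont : ∀ n, ∀ f ∈ S,
      N (R n f) ≤ (∑ i ∈ Finset.range n, max (C i) 0 * N (fv i)) * N f := fun n f hf => by
    rw [hR, Finset.sum_mul]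
    refine (hN.norm_sum_le _ fun i _ => hN.smul_mem _ (hfv i)).trans
      (Finset.sum_le_sum fun i _ => ?_)
    rw [hN.norm_smul _ (hfv i), mul_right_comm]
    exact mul_le_mul_of_nonneg_right (hgsS i f hf) (hN.nonneg (hfv i))
  have hRK : ∀ n, ∀ f ∈ S, N (R n f) ≤ K * N f := fun n f hf =>
    hN.norm_apply_le_of_dense hFS hF (hRS n) (hRcont n)
      (fun h hh => hRF n h hh ▸ hK n h hh) hf
  refine ⟨gs, fun i => ⟨_, hgsS i⟩, fun i h hh => hgsF i ⟨h, hh⟩, fun f hf => ?_⟩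
  simpa only [hR] using hN.tendsto_of_dense hFS hF hRS hRK
    (fun h hh => by simpa only [hRF _ h hh] using hexp h hh) hf

/-- `Q c x` singles out a limit `x` of `L n c`; since limits are unique, the choice is linear
in `c`. -/
theorem exists_linearMap_of_limit (hN : IsNormOn S N) {M : Type*} [AddCommGroup M]
    [Module ℝ M] {p : Submodule ℝ M} (L : ℕ → M →ₗ[ℝ] X) (hL : ∀ n, ∀ c ∈ p, L n c ∈ S)
    (Q : M → X → Prop)
    (hQ : ∀ c ∈ p, ∀ x, Q c x → x ∈ S ∧ Tendsto (fun n => N (x - L n c)) atTop (𝓝 0))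
    (hex : ∀ c ∈ p, ∃ x, Q c x) : ∃ V : M →ₗ[ℝ] X, ∀ c ∈ p, Q c (V c) := by
  choose x hx using fun c : p => hex c c.2
  have hxS : ∀ c : p, x c ∈ S := fun c => (hQ c c.2 _ (hx c)).1
  have hxL : ∀ c : p, Tendsto (fun n => N (x c - L n c)) atTop (𝓝 0) :=
    fun c => (hQ c c.2 _ (hx c)).2
  have hLp : ∀ (c : p) n, L n c ∈ S := fun c n => hL n c c.2
  let V₀ : p →ₗ[ℝ] X :=
    { toFun := x
      map_add' := fun c d => hN.eq_of_tendsto (hLp (c + d)) (hxS _)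
        (hN.add_mem (hxS c) (hxS d)) (hxL _)
        (by simpa using hN.tendsto_add (hLp c) (hLp d) (hxS c) (hxS d) (hxL c) (hxL d))
      map_smul' := fun a c => hN.eq_of_tendsto (hLp (a • c)) (hxS _)
        (hN.smul_mem a (hxS c)) (hxL _)
        (by simpa using hN.tendsto_smul a (hLp c) (hxS c) (hxL c)) }
  obtain ⟨V, hV⟩ := LinearMap.exists_extend V₀
  exact ⟨V, fun c hc => by simpa [V₀] using
    (LinearMap.congr_fun hV ⟨c, hc⟩).symm ▸ hx ⟨c, hc⟩⟩

end IsNormOn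

def seqTrunc (c : ℕ → ℝ) (n : ℕ) : ℕ → ℝ := fun j => if j < n then c j else 0

theorem seqTrunc_zero (c : ℕ → ℝ) : seqTrunc c 0 = 0 := by
  funext j
  simp [seqTrunc]

theorem seqTrunc_eq_sum (c : ℕ → ℝ) (n : ℕ) :
    seqTrunc c n = ∑ i ∈ Finset.range n, c i • Pi.single i (1 : ℝ) := by
  funext j
  simp [seqTrunc, Finset.sum_apply, Pi.single_apply]

theorem IsNormOn.seqTrunc_mem {T : Set (ℕ → ℝ)} {NT : (ℕ → ℝ) → ℝ} (hT : IsNormOn T NT)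
    (hcanon : ∀ i, Pi.single i (1 : ℝ) ∈ T) (c : ℕ → ℝ) (n : ℕ) : seqTrunc c n ∈ T := by
  rw [seqTrunc_eq_sum]
  exact hT.sum_mem fun i _ => hT.smul_mem _ (hcanon i)

theorem sum_range_seqTrunc_sub_seqTrunc (c d : ℕ → ℝ) {m n k : ℕ} (hmn : m ≤ n) (hnk : n ≤ k) :
    ∑ i ∈ Finset.range k, seqTrunc (c - seqTrunc c m) n i * d i =
      ∑ i ∈ Finset.Ico m n, c i * d i := by
  rw [Finset.range_eq_Ico, ← Finset.sum_Ico_consecutive _ (Nat.zero_le m) (hmn.trans hnk),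
    ← Finset.sum_Ico_consecutive _ hmn hnk]
  have h₁ : ∀ i ∈ Finset.Ico 0 m, seqTrunc (c - seqTrunc c m) n i * d i = 0 := fun i hi => by
    simp [seqTrunc, (Finset.mem_Ico.1 hi).2]
  have h₂ : ∀ i ∈ Finset.Ico m n, seqTrunc (c - seqTrunc c m) n i * d i = c i * d i :=
    fun i hi => by simp [seqTrunc, (Finset.mem_Ico.1 hi).2, not_lt.2 (Finset.mem_Ico.1 hi).1]
  have h₃ : ∀ i ∈ Finset.Ico n k, seqTrunc (c - seqTrunc c m) n i * d i = 0 := fun i hi => by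
    simp [seqTrunc, not_lt.2 (Finset.mem_Ico.1 hi).1]
  rw [Finset.sum_eq_zero h₁, Finset.sum_congr rfl h₂, Finset.sum_eq_zero h₃, zero_add, add_zero]

section Synthesis

variable {X : Type*} [AddCommGroup X] [Module ℝ X]

/-- `fv` is a `Θ*`-Bessel sequence for `X*` with bound `D`, where `X = (S, N)` and
`Θ = (T, NT)`: for every functional `G` of norm at most `C`, `(G (fv i))_i` lies in `Θ*` with
norm at most `D * C`. -/
def IsDualBessel (S : Set X) (N : X → ℝ) (T : Set (ℕ → ℝ)) (NT : (ℕ → ℝ) → ℝ) (fv : ℕ → X)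
    (D : ℝ) : Prop :=
  ∀ G : X →ₗ[ℝ] ℝ, ∀ C : ℝ, (∀ f ∈ S, |G f| ≤ C * N f) →
    ∀ c ∈ T, ∃ L : ℝ, Tendsto (fun n => ∑ i ∈ Finset.range n, c i * G (fv i)) atTop (𝓝 L) ∧
      |L| ≤ D * C * NT c

variable {S : Set X} {N : X → ℝ} {T : Set (ℕ → ℝ)} {NT : (ℕ → ℝ) → ℝ} {fv : ℕ → X} {D : ℝ}

theorem IsDualBessel.norm_sum_Ico_le (hD : IsDualBessel S N T NT fv D) (hN : IsNormOn S N)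
    (hT : IsNormOn T NT) (hcanon : ∀ i, Pi.single i (1 : ℝ) ∈ T) (hfv : ∀ i, fv i ∈ S)
    (c : ℕ → ℝ) {m n : ℕ} (hmn : m ≤ n) :
    N (∑ i ∈ Finset.Ico m n, c i • fv i) ≤ D * NT (seqTrunc (c - seqTrunc c m) n) := by
  set x := ∑ i ∈ Finset.Ico m n, c i • fv i
  have hx : x ∈ S := hN.sum_mem fun i _ => hN.smul_mem (c i) (hfv i)
  obtain ⟨G, hGx, hG⟩ := hN.exists_dual_eq_norm hx
  obtain ⟨L, hL, hLle⟩ := hD G 1 (fun f hf => by simpa using hG f hf)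
    (seqTrunc (c - seqTrunc c m) n) (hT.seqTrunc_mem hcanon _ n)
  -- the partial sums of the window sequence are eventually constant, equal to `G x`
  have hLx : L = G x := by
    refine tendsto_nhds_unique hL (tendsto_atTop_of_eventually_const (i₀ := n) fun k hk => ?_)
    rw [sum_range_seqTrunc_sub_seqTrunc c _ hmn hk, map_sum]
    simp
  calc N x = L := by rw [hLx, hGx]
    _ ≤ |L| := le_abs_self L
    _ ≤ D * NT (seqTrunc (c - seqTrunc c m) n) := by simpa using hLle

theorem IsDualBessel.exists_norm_sum_Ico_le (hD : IsDualBessel S N T NT fv D)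
    (hN : IsNormOn S N) (hT : IsNormOn T NT) (hcanon : ∀ i, Pi.single i (1 : ℝ) ∈ T)
    (hfv : ∀ i, fv i ∈ S) {lam : ℝ} (htrunc : ∀ c ∈ T, ∀ n, NT (seqTrunc c n) ≤ lam * NT c) :
    ∃ K, 0 ≤ K ∧ ∀ c ∈ T, ∀ m n, m ≤ n →
      N (∑ i ∈ Finset.Ico m n, c i • fv i) ≤ K * NT (c - seqTrunc c m) := by
  refine ⟨max D 0 * max lam 0, by positivity, fun c hc m n hmn => ?_⟩
  have htail := hT.sub_mem hc (hT.seqTrunc_mem hcanon c m)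
  have hwin := hT.seqTrunc_mem hcanon (c - seqTrunc c m) n
  calc N (∑ i ∈ Finset.Ico m n, c i • fv i)
      ≤ D * NT (seqTrunc (c - seqTrunc c m) n) := hD.norm_sum_Ico_le hN hT hcanon hfv c hmn
    _ ≤ max D 0 * NT (seqTrunc (c - seqTrunc c m) n) :=
        mul_le_mul_of_nonneg_right (le_max_left D 0) (hT.nonneg hwin)
    _ ≤ max D 0 * (max lam 0 * NT (c - seqTrunc c m)) :=
        mul_le_mul_of_nonneg_left ((htrunc _ htail n).trans
          (mul_le_mul_of_nonneg_right (le_max_left lam 0) (hT.nonneg htail))) (le_max_right D 0)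
    _ = max D 0 * max lam 0 * NT (c - seqTrunc c m) := (mul_assoc _ _ _).symm

theorem norm_sum_range_le_of_norm_sum_Ico_le {N : X → ℝ} {NT : (ℕ → ℝ) → ℝ} {c : ℕ → ℝ}
    {K : ℝ} (hK : ∀ m n, m ≤ n →
      N (∑ i ∈ Finset.Ico m n, c i • fv i) ≤ K * NT (c - seqTrunc c m)) (n : ℕ) :
    N (∑ i ∈ Finset.range n, c i • fv i) ≤ K * NT c := by
  have h := hK 0 n n.zero_le
  rwa [seqTrunc_zero, sub_zero, ← Finset.range_eq_Ico] at h

def partialSynthesis (fv : ℕ → X) (n : ℕ) : (ℕ → ℝ) →ₗ[ℝ] X :=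
  ∑ i ∈ Finset.range n, (LinearMap.proj i : (ℕ → ℝ) →ₗ[ℝ] ℝ).smulRight (fv i)

@[simp]
theorem partialSynthesis_apply (fv : ℕ → X) (n : ℕ) (c : ℕ → ℝ) :
    partialSynthesis fv n c = ∑ i ∈ Finset.range n, c i • fv i := by
  simp [partialSynthesis]

end Synthesis

theorem IsNormOn.exists_abs_apply_le_of_bessel {T : Set (ℕ → ℝ)} {NT : (ℕ → ℝ) → ℝ}
    (hT : IsNormOn T NT) {i : ℕ} {Ki : ℝ} (hKi : ∀ c ∈ T, |c i| ≤ Ki * NT c) {X : Type*}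
    {D : Set X} {N : X → ℝ} {a : X → ℕ → ℝ} {B : ℝ}
    (ha : ∀ h ∈ D, a h ∈ T ∧ NT (a h) ≤ B * N h) : ∃ C, ∀ h ∈ D, |a h i| ≤ C * N h := by
  refine ⟨max Ki 0 * B, fun h hh => ?_⟩
  calc |a h i| ≤ Ki * NT (a h) := hKi _ (ha h hh).1
    _ ≤ max Ki 0 * NT (a h) := mul_le_mul_of_nonneg_right (le_max_left _ _) (hT.nonneg (ha h hh).1)
    _ ≤ max Ki 0 * (B * N h) := mul_le_mul_of_nonneg_left (ha h hh).2 (le_max_right _ _)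
    _ = max Ki 0 * B * N h := (mul_assoc _ _ _).symm

namespace IsScale

variable {X : Type*} [AddCommGroup X] [Module ℝ X] {S : ℕ → Set X} {N : ℕ → X → ℝ}

theorem isNormOn (hX : IsScale S N) (s : ℕ) : IsNormOn (S s) (N s) := (hX.1 s).1

theorem exists_tendsto_of_cauchy (hX : IsScale S N) {u : ℕ → X} (hu : ∀ n, u n ∈ ⋂ s, S s)
    (hcau : ∀ s, ∀ ε > 0, ∃ M, ∀ m ≥ M, ∀ n ≥ M, N s (u m - u n) < ε) :
    ∃ x ∈ ⋂ s, S s, ∀ s, Tendsto (fun n => N s (x - u n)) atTop (𝓝 0) := by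
  have hus : ∀ s n, u n ∈ S s := fun s n => Set.mem_iInter.1 (hu n) s
  have hlim : ∀ s, ∃ y ∈ S s, Tendsto (fun n => N s (y - u n)) atTop (𝓝 0) := fun s => by
    obtain ⟨y, hy, hyu⟩ := (hX.1 s).2 u (hus s) (hcau s)
    exact ⟨y, hy, by simpa only [(hX.isNormOn s).norm_sub_comm (hus s _) hy] using hyu⟩
  choose y hyS hy using hlim
  -- `y (s + 1)` is also an `N s`-limit of `u`, since `N s ≤ N (s + 1)` on `S (s + 1)`
  have hstep : ∀ s, y (s + 1) = y s := fun s =>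
    (hX.isNormOn s).eq_of_tendsto (hus s) (hX.2.1 s (hyS (s + 1))) (hyS s)
      (squeeze_zero (fun n => (hX.isNormOn s).nonneg (hX.2.1 s
          ((hX.isNormOn (s + 1)).sub_mem (hyS (s + 1)) (hus (s + 1) n))))
        (fun n => hX.2.2.1 s _ ((hX.isNormOn (s + 1)).sub_mem (hyS (s + 1)) (hus (s + 1) n)))
        (hy (s + 1)))
      (hy s)
  have hconst : ∀ s, y s = y 0 := fun s => by
    induction s with
    | zero => rfl
    | succ s ih => rw [hstep s, ih]
  exact ⟨y 0, Set.mem_iInter.2 fun s => hconst s ▸ hyS s, fun s => hconst s ▸ hy s⟩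

theorem exists_synthesis (hX : IsScale S N) {T : ℕ → Set (ℕ → ℝ)}
    {NT : ℕ → (ℕ → ℝ) → ℝ} (hT : ∀ s, IsNormOn (T s) (NT s))
    (hCB : ∀ s, ∀ c ∈ T s, Tendsto (fun n => NT s (c - seqTrunc c n)) atTop (𝓝 0))
    {fv : ℕ → X} (hfv : ∀ i, fv i ∈ ⋂ s, S s) {K : ℕ → ℝ}
    (hK : ∀ s, ∀ c ∈ T s, ∀ m n, m ≤ n →
      N s (∑ i ∈ Finset.Ico m n, c i • fv i) ≤ K s * NT s (c - seqTrunc c m)) :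
    ∃ V : (ℕ → ℝ) →ₗ[ℝ] X, ∀ c ∈ ⋂ s, T s, V c ∈ ⋂ s, S s ∧
      (∀ s, Tendsto (fun n => N s (V c - ∑ i ∈ Finset.range n, c i • fv i)) atTop (𝓝 0)) ∧
      ∀ s, N s (V c) ≤ K s * NT s c := by
  have hsum : ∀ s (c : ℕ → ℝ) n, ∑ i ∈ Finset.range n, c i • fv i ∈ S s := fun s c n =>
    (hX.isNormOn s).sum_mem fun i _ => (hX.isNormOn s).smul_mem _ (Set.mem_iInter.1 (hfv i) s)
  obtain ⟨V, hV⟩ := (hX.isNormOn 0).exists_linearMap_of_limit (p := ⨅ s, (hT s).submodule)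
    (partialSynthesis fv) (fun n c _ => by simpa using hsum 0 c n)
    (fun c x => x ∈ ⋂ s, S s ∧
      ∀ s, Tendsto (fun n => N s (x - ∑ i ∈ Finset.range n, c i • fv i)) atTop (𝓝 0))
    (fun c _ x hx => ⟨Set.mem_iInter.1 hx.1 0, by simpa using hx.2 0⟩)
    fun c hc => by
      have hcs : ∀ s, c ∈ T s := fun s => Submodule.mem_iInf _ |>.1 hc s
      refine hX.exists_tendsto_of_cauchy (fun n => Set.mem_iInter.2 fun s => hsum s c n)
        fun s => (hX.isNormOn s).cauchy_of_norm_sub_le (hsum s c)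
          (by simpa using (hCB s c (hcs s)).const_mul (K s)) fun m n hmn => ?_
      rw [← Finset.sum_Ico_eq_sub _ hmn]
      exact hK s c (hcs s) m n hmn
  refine ⟨V, fun c hc => ?_⟩
  obtain ⟨hVS, hVlim⟩ := hV c (Submodule.mem_iInf _ |>.2 (Set.mem_iInter.1 hc))
  exact ⟨hVS, hVlim, fun s => (hX.isNormOn s).norm_le_of_tendsto (hsum s c)
    (Set.mem_iInter.1 hVS s)
    (norm_sum_range_le_of_norm_sum_Ico_le (hK s c (Set.mem_iInter.1 hc s))) (hVlim s)⟩

theorem exists_expansion (hX : IsScale S N) (s : ℕ) {g : ℕ → X →ₗ[ℝ] ℝ}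
    (hg : ∀ i, ∃ C, ∀ h ∈ ⋂ t, S t, |g i h| ≤ C * N s h) {fv : ℕ → X} (hfv : ∀ i, fv i ∈ S s)
    {K : ℝ} (hK : ∀ n, ∀ h ∈ ⋂ t, S t, N s (∑ i ∈ Finset.range n, g i h • fv i) ≤ K * N s h)
    (hexp : ∀ h ∈ ⋂ t, S t,
      Tendsto (fun n => N s (h - ∑ i ∈ Finset.range n, g i h • fv i)) atTop (𝓝 0)) :
    ∃ gs : ℕ → X →ₗ[ℝ] ℝ, (∀ i, ∃ C, ∀ f ∈ S s, |gs i f| ≤ C * N s f) ∧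
      (∀ i, ∀ f ∈ ⋂ t, S t, gs i f = g i f) ∧
      ∀ f ∈ S s, Tendsto (fun n => N s (f - ∑ i ∈ Finset.range n, gs i f • fv i)) atTop (𝓝 0) := by
  have hF : ∀ x, x ∈ ⨅ t, (hX.isNormOn t).submodule ↔ x ∈ ⋂ t, S t := fun x =>
    Submodule.mem_iInf _ |>.trans Set.mem_iInter.symm
  obtain ⟨gs, hgsS, hgsF, hgsexp⟩ := (hX.isNormOn s).exists_expansion_of_dense
    (fun x hx => Set.mem_iInter.1 ((hF x).1 hx) s)
    (fun f hf ε hε => by simpa only [hF] using hX.2.2.2 s f hf ε hε)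
    (fun i => by simpa only [hF] using hg i) hfv (fun n h hh => hK n h ((hF h).1 hh))
    (fun h hh => hexp h ((hF h).1 hh))
  exact ⟨gs, hgsS, fun i f hf => hgsF i f ((hF f).2 hf), hgsexp⟩

end IsScale

theorem expansions_extend_and_Fframe_general
    {X : Type*} [AddCommGroup X] [Module ℝ X]
    (S : ℕ → Set X) (N : ℕ → X → ℝ) (hX : IsScale S N)
    (T : ℕ → Set (ℕ → ℝ)) (NT : ℕ → (ℕ → ℝ) → ℝ) (hT : IsScale T NT)
    (hBK : ∀ s, ∀ i, ∃ K : ℝ, ∀ c ∈ T s, |c i| ≤ K * NT s c)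
    (lam : ℕ → ℝ)
    (hcanon : ∀ s i, Pi.single i (1 : ℝ) ∈ T s)
    (htrunc : ∀ s, ∀ c ∈ T s, ∀ n : ℕ,
      NT s (fun j => if j < n then c j else 0) ≤ lam s * NT s c)
    (hCB : ∀ s, ∀ c ∈ T s,
      Tendsto (fun n => NT s (c - fun j => if j < n then c j else 0)) atTop (nhds 0))
    (g : ℕ → X →ₗ[ℝ] ℝ) (B : ℕ → ℝ)
    -- F-Bessel sequence for `X_F` w.r.t. `Θ_F`:
    (hBessel : ∀ f ∈ ⋂ s, S s, (fun i => g i f) ∈ ⋂ s, T s ∧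
      ∀ s, NT s (fun i => g i f) ≤ B s * N s f)
    (fv : ℕ → X) (hfv : ∀ i, fv i ∈ ⋂ s, S s)
    -- DF-Bessel: `(fv i)` is a `Θ_s*`-Bessel sequence for `X_s*` for every `s`:
    (hDF : ∀ s, ∃ D : ℝ, ∀ G : X →ₗ[ℝ] ℝ, ∀ C : ℝ, (∀ f ∈ S s, |G f| ≤ C * N s f) →
      ∀ c ∈ T s, ∃ L : ℝ,
        Tendsto (fun n => ∑ i ∈ Finset.range n, c i * G (fv i)) atTop (nhds L) ∧
        |L| ≤ D * C * NT s c)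
    -- the expansion `f = ∑ g i f • fv i` holds in `X_F`:
    (hexp : ∀ f ∈ ⋂ s, S s, ∀ s,
      Tendsto (fun n => N s (f - ∑ i ∈ Finset.range n, g i f • fv i)) atTop (nhds 0)) :
    (∀ s, ∃ gs : ℕ → X →ₗ[ℝ] ℝ,
      (∀ i, ∃ C : ℝ, ∀ f ∈ S s, |gs i f| ≤ C * N s f) ∧
      (∀ i, ∀ f ∈ ⋂ t, S t, gs i f = g i f) ∧
      (∀ f ∈ S s,
        Tendsto (fun n => N s (f - ∑ i ∈ Finset.range n, gs i f • fv i)) atTop (nhds 0))) ∧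
    ((∀ s, ∃ A > 0, ∀ f ∈ ⋂ t, S t, A * N s f ≤ NT s (fun i => g i f)) ∧
      ∃ V : (ℕ → ℝ) →ₗ[ℝ] X,
        (∀ c ∈ ⋂ s, T s, V c ∈ ⋂ s, S s) ∧
        (∀ s, ∃ K : ℝ, ∀ c ∈ ⋂ t, T t, N s (V c) ≤ K * NT s c) ∧
        (∀ f ∈ ⋂ s, S s, V (fun i => g i f) = f)) := by
  have hXN := hX.isNormOn
  have hTN : ∀ s, IsNormOn (T s) (NT s) := fun s => (hT.1 s).1
  have hfvS : ∀ s i, fv i ∈ S s := fun s i => Set.mem_iInter.1 (hfv i) s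
  have hgT : ∀ f ∈ ⋂ t, S t, ∀ s, (fun i => g i f) ∈ T s := fun f hf =>
    Set.mem_iInter.1 (hBessel f hf).1
  choose D hD using hDF
  choose K hK0 hK using fun s => IsDualBessel.exists_norm_sum_Ico_le (hD s) (hXN s) (hTN s)
    (hcanon s) (hfvS s) (htrunc s)
  obtain ⟨V, hV⟩ := hX.exists_synthesis hTN hCB hfv hK
  have hVg : ∀ f ∈ ⋂ s, S s, V (fun i => g i f) = f := fun f hf =>
    (hXN 0).eq_of_tendsto (fun n => (hXN 0).sum_mem fun i _ => (hXN 0).smul_mem _ (hfvS 0 i))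
      (Set.mem_iInter.1 (hV _ (hBessel f hf).1).1 0) (Set.mem_iInter.1 hf 0)
      ((hV _ (hBessel f hf).1).2.1 0) (hexp f hf 0)
  refine ⟨fun s => hX.exists_expansion s
      (fun i => (hTN s).exists_abs_apply_le_of_bessel (hBK s i).choose_spec fun h hh =>
        ⟨hgT h hh s, (hBessel h hh).2 s⟩)
      (hfvS s) (K := K s * B s)
      (fun n h hh => (norm_sum_range_le_of_norm_sum_Ico_le (hK s _ (hgT h hh s)) n).trans <| by
        rw [mul_assoc]
        exact mul_le_mul_of_nonneg_left ((hBessel h hh).2 s) (hK0 s))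
      (fun h hh => hexp h hh s),
    fun s => ⟨(K s + 1)⁻¹, inv_pos.2 (by linarith [hK0 s]), fun f hf => ?_⟩,
    V, fun c hc => (hV c hc).1, fun s => ⟨K s, fun c hc => (hV c hc).2.2 s⟩, hVg⟩
  rw [inv_mul_le_iff₀ (by linarith [hK0 s])]
  calc N s f = N s (V fun i => g i f) := by rw [hVg f hf]
    _ ≤ K s * NT s (fun i => g i f) := (hV _ (hBessel f hf).1).2.2 s
    _ ≤ (K s + 1) * NT s (fun i => g i f) :=
        mul_le_mul_of_nonneg_right (by linarith) ((hTN s).nonneg (hgT f hf s))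

/-- let `{X_s}` be a Banach scale and `{Θ_s}` a scale of `λ_s`-BK-spaces
such that each `Θ_s` and each dual `Θ_s*` is a CB-space (the CB-property of the dual is
expressed by the vanishing of the tail norms of every bounded coefficient functional).
If `(g i) ⊂ X_F*` is an F-Bessel sequence for `X_F` w.r.t. `Θ_F` and `(fv i) ⊂ X_F` is a
DF-Bessel sequence (a `Θ_s*`-Bessel sequence for `X_s*` for every `s`) with
`f = ∑ g i f • fv i` in `X_F` for every `f ∈ X_F`, then for every `s` the extensions
`g_i^s` of `g_i` to `X_s` give `f = ∑ g_i^s(f) • fv i` in `X_s` for every `f ∈ X_s`, and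
`(g i)` is an F-frame for `X_F` with respect to `Θ_F`. -/
theorem expansions_extend_and_Fframe
    {X : Type*} [AddCommGroup X] [Module ℝ X]
    (S : ℕ → Set X) (N : ℕ → X → ℝ) (hX : IsScale S N)
    (T : ℕ → Set (ℕ → ℝ)) (NT : ℕ → (ℕ → ℝ) → ℝ) (hT : IsScale T NT)
    (hBK : ∀ s, ∀ i, ∃ K : ℝ, ∀ c ∈ T s, |c i| ≤ K * NT s c)
    (lam : ℕ → ℝ) (hlam : ∀ s, 1 ≤ lam s)
    (hcanon : ∀ s i, Pi.single i (1 : ℝ) ∈ T s)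
    (htrunc : ∀ s, ∀ c ∈ T s, ∀ n : ℕ,
      NT s (fun j => if j < n then c j else 0) ≤ lam s * NT s c)
    (hCB : ∀ s, ∀ c ∈ T s,
      Tendsto (fun n => NT s (c - fun j => if j < n then c j else 0)) atTop (nhds 0))
    -- `Θ_s*` is a CB-space: the tail norms of every bounded coefficient functional
    -- `d = (G (e i))_i ∈ Θ_s*` tend to `0`.
    (hdualCB : ∀ s, ∀ d : ℕ → ℝ,
      (∃ K : ℝ, ∀ c ∈ T s, ∀ n : ℕ, |∑ i ∈ Finset.range n, c i * d i| ≤ K * NT s c) →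
      Tendsto (fun n => sInf {K : ℝ | 0 ≤ K ∧ ∀ c ∈ T s, ∀ m : ℕ,
        |∑ i ∈ Finset.Ico n m, c i * d i| ≤ K * NT s c}) atTop (nhds 0))
    (g : ℕ → X →ₗ[ℝ] ℝ) (B : ℕ → ℝ)
    -- F-Bessel sequence for `X_F` w.r.t. `Θ_F`:
    (hBessel : ∀ f ∈ ⋂ s, S s, (fun i => g i f) ∈ ⋂ s, T s ∧
      ∀ s, NT s (fun i => g i f) ≤ B s * N s f)
    (fv : ℕ → X) (hfv : ∀ i, fv i ∈ ⋂ s, S s)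
    -- DF-Bessel: `(fv i)` is a `Θ_s*`-Bessel sequence for `X_s*` for every `s`:
    (hDF : ∀ s, ∃ D : ℝ, ∀ G : X →ₗ[ℝ] ℝ, ∀ C : ℝ, (∀ f ∈ S s, |G f| ≤ C * N s f) →
      ∀ c ∈ T s, ∃ L : ℝ,
        Tendsto (fun n => ∑ i ∈ Finset.range n, c i * G (fv i)) atTop (nhds L) ∧
        |L| ≤ D * C * NT s c)
    -- the expansion `f = ∑ g i f • fv i` holds in `X_F`:
    (hexp : ∀ f ∈ ⋂ s, S s, ∀ s,
      Tendsto (fun n => N s (f - ∑ i ∈ Finset.range n, g i f • fv i)) atTop (nhds 0)) :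
    (∀ s, ∃ gs : ℕ → X →ₗ[ℝ] ℝ,
      (∀ i, ∃ C : ℝ, ∀ f ∈ S s, |gs i f| ≤ C * N s f) ∧
      (∀ i, ∀ f ∈ ⋂ t, S t, gs i f = g i f) ∧
      (∀ f ∈ S s,
        Tendsto (fun n => N s (f - ∑ i ∈ Finset.range n, gs i f • fv i)) atTop (nhds 0))) ∧
    ((∀ s, ∃ A > 0, ∀ f ∈ ⋂ t, S t, A * N s f ≤ NT s (fun i => g i f)) ∧
      ∃ V : (ℕ → ℝ) →ₗ[ℝ] X,
        (∀ c ∈ ⋂ s, T s, V c ∈ ⋂ s, S s) ∧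
        (∀ s, ∃ K : ℝ, ∀ c ∈ ⋂ t, T t, N s (V c) ≤ K * NT s c) ∧
        (∀ f ∈ ⋂ s, S s, V (fun i => g i f) = f)) :=
  expansions_extend_and_Fframe_general S N hX T NT hT hBK lam hcanon htrunc hCB g B hBessel fv hfv
    hDF hexp
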